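/- arXiv:1212.6809 — 4 statements merged into one kernel-verified Lean document; each statement's English description precedes it below -/
import Mathlib

section
/- Let α be a real number with |α| ≤ 2π, and let u ∈ C([0,1]) be the unitary defined by u(t) = exp(iαt). Then the C* exponential length of u equals |α|; that is, the infimum of the lengths of rectifiable paths of unitaries in C([0,1]) from the constant function 1 to u equals |α|. -/
open scoped Real ENNReal

/-- The C* exponential length of a unitary `u` in `C([0,1])`, realized as the infimum of
lengths of rectifiable paths of unitaries (continuous maps `[0,1] → S¹`) from `1` to `u`.
Here a path is a continuous family `F : [0,1] → C([0,1], S¹)` with `F 0 = 1`, `F 1 = u`,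
and its length is the total variation `eVariationOn F Set.univ`. -/
noncomputable def celCircle (u : C(unitInterval, Circle)) : ℝ≥0∞ :=
  ⨅ (F : unitInterval → C(unitInterval, Circle)) (_ : Continuous F)
    (_ : F 0 = 1) (_ : F 1 = u), eVariationOn F Set.univ

/-!
Chords of the circle are shorter than arcs, so `s ↦ (t ↦ exp(iαst))` is an `|α|`-Lipschitz path
from `1` to `u`, of length at most `|α|`.

Conversely, a path `F` from `1` to `u` is a homotopy of circle-valued maps; it lifts through the
covering `ℝ → S¹` to `Θ` with `Θ(0, ·) = 0`. Short chords are almost as long as their arcs, so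
the length of `F` is at least that of `s ↦ F(s)(t)`, which is at least `|Θ(1, t)|`. As `Θ(1, ·)`
lifts `t ↦ exp(iαt)`, it equals `αt + 2πk` for an integer `k`: either `k = 0` and
`|Θ(1, 1)| = |α|`, or `|Θ(1, 0)| ≥ 2π ≥ |α|`.
-/

open Set unitInterval

namespace Circle

theorem dist_exp_exp (x y : ℝ) : dist (exp x) (exp y) = |2 * Real.sin ((x - y) / 2)| := by
  have : (exp x : ℂ) - exp y = exp y * (Complex.exp (Complex.I * ↑(x - y)) - 1) := by
    rw [mul_sub, coe_exp, coe_exp, ← Complex.exp_add, mul_one]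
    push_cast; ring_nf
  change dist (exp x : ℂ) (exp y) = _
  rw [dist_eq_norm, this, norm_mul, norm_coe, one_mul,
    Complex.norm_exp_I_mul_ofReal_sub_one, Real.norm_eq_abs]

theorem lipschitzWith_exp : LipschitzWith 1 exp :=
  LipschitzWith.of_dist_le_mul fun x y => by
    rw [dist_exp_exp, abs_mul, abs_two, NNReal.coe_one, one_mul, Real.dist_eq]
    have := Real.abs_sin_le_abs (x := (x - y) / 2)
    rw [abs_div, abs_two] at this
    linarith

theorem abs_sub_sub_cube_le_dist_exp (x y : ℝ) :
    |x - y| - |x - y| ^ 3 / 24 ≤ dist (exp x) (exp y) := by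
  have h := Real.abs_sub_sin_le ((x - y) / 2)
  rw [dist_exp_exp, abs_mul, abs_two, abs_div, abs_two] at *
  have h2 := abs_sub_abs_le_abs_sub ((x - y) / 2) (Real.sin ((x - y) / 2))
  rw [abs_div, abs_two] at h2
  nlinarith

theorem exists_int_of_exp_eq_exp {X : Type*} [TopologicalSpace X] [PreconnectedSpace X]
    {θ ψ : X → ℝ} (hθ : Continuous θ) (hψ : Continuous ψ) (h : ∀ x, exp (θ x) = exp (ψ x)) :
    ∃ k : ℤ, ∀ x, θ x = ψ x + k * (2 * π) := by
  rcases isEmpty_or_nonempty X with _ | ⟨⟨x₀⟩⟩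
  · exact ⟨0, fun x => isEmptyElim x⟩
  obtain ⟨k, hk⟩ := exp_eq_exp.1 (h x₀)
  refine ⟨k, congr_fun (isCoveringMap_exp.eq_of_comp_eq hθ (hψ.add continuous_const)
    (funext fun x => ?_) x₀ hk)⟩
  simp [exp_add, h x]

end Circle

theorem ContinuousMap.lipschitzWith_eval {X E : Type*} [TopologicalSpace X] [CompactSpace X]
    [PseudoMetricSpace E] (x : X) : LipschitzWith 1 fun f : C(X, E) => f x :=
  LipschitzWith.of_dist_le_mul fun f g => by
    simpa using ContinuousMap.dist_apply_le_dist x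

noncomputable def expMulPath (α : ℝ) (s : ℝ) : C(I, Circle) :=
  ⟨fun t => Circle.exp (α * s * t), by fun_prop⟩

theorem lipschitzWith_expMulPath (α : ℝ) : LipschitzWith ‖α‖₊ (expMulPath α) :=
  LipschitzWith.of_dist_le_mul fun s s' => (ContinuousMap.dist_le (by positivity)).2 fun t =>
    calc dist (Circle.exp (α * s * t)) (Circle.exp (α * s' * t)) ≤ |α| * |s - s'| * t := by
          grw [Circle.lipschitzWith_exp.dist_le_mul, Real.dist_eq]
          rw [NNReal.coe_one, one_mul, show α * s * t - α * s' * t = α * (s - s') * t by ring,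
            abs_mul, abs_mul, abs_of_nonneg t.2.1]
      _ ≤ ‖α‖₊ * dist s s' := by
          rw [coe_nnnorm, Real.norm_eq_abs, Real.dist_eq]
          exact mul_le_of_le_one_right (by positivity) t.2.2

theorem celCircle_le_ofReal_abs {α : ℝ} {u : C(I, Circle)} (hu : ∀ t, u t = Circle.exp (α * t)) :
    celCircle u ≤ ENNReal.ofReal |α| := by
  have hF := lipschitzWith_expMulPath α
  have h0 : expMulPath α 0 = 1 := by ext t; simp [expMulPath]
  have h1 : expMulPath α 1 = u := by ext t; simp [expMulPath, hu]
  calc celCircle u ≤ eVariationOn (expMulPath α ∘ Subtype.val) univ :=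
        iInf₂_le_of_le _ (hF.continuous.comp continuous_subtype_val) <| iInf₂_le_of_le h0 h1 le_rfl
    _ = eVariationOn (expMulPath α ∘ id) (Icc 0 1) := by
        rw [eVariationOn.comp_eq_of_monotoneOn _ Subtype.val fun _ _ _ _ h => h, image_univ,
          Subtype.range_coe]
        rfl
    _ ≤ ‖α‖₊ * eVariationOn id (Icc (0 : ℝ) 1) :=
        hF.lipschitzOnWith.comp_eVariationOn_le (mapsTo_id _)
    _ = ENNReal.ofReal |α| := by simp [← Real.enorm_eq_ofReal_abs, enorm]

theorem ofReal_mul_abs_sub_le_eVariationOn {E : Type*} [PseudoMetricSpace E] {g : I → E}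
    {θ : I → ℝ} (hθ : Continuous θ) {c r : ℝ} (hc : 0 ≤ c) (hr : 0 < r)
    (hg : ∀ x y, |θ x - θ y| < r → c * |θ x - θ y| ≤ dist (g x) (g y)) :
    ENNReal.ofReal (c * |θ 1 - θ 0|) ≤ eVariationOn g univ := by
  obtain ⟨t, ht0, ht, ⟨n, htn⟩, hcover⟩ := exists_monotone_Icc_subset_open_cover_unitInterval
    (c := fun y => θ ⁻¹' Metric.ball (θ y) (r / 2)) (fun y => Metric.isOpen_ball.preimage hθ)
    (fun x _ => mem_iUnion.2 ⟨x, by simpa using half_pos hr⟩)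
  have hstep : ∀ i, |θ (t (i + 1)) - θ (t i)| < r := fun i => by
    obtain ⟨y, hy⟩ := hcover i
    have h₁ := hy ⟨ht i.le_succ, le_rfl⟩
    have h₀ := hy ⟨le_rfl, ht i.le_succ⟩
    simp only [mem_preimage, Metric.mem_ball, Real.dist_eq] at h₀ h₁
    linarith [abs_sub_le (θ (t (i + 1))) (θ y) (θ (t i)), abs_sub_comm (θ (t i)) (θ y)]
  calc ENNReal.ofReal (c * |θ 1 - θ 0|)
      = ENNReal.ofReal (c * |∑ i ∈ Finset.range n, (θ (t (i + 1)) - θ (t i))|) := by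
        rw [Finset.sum_range_sub (fun i => θ (t i)), htn n le_rfl, ht0]
    _ ≤ ENNReal.ofReal (∑ i ∈ Finset.range n, dist (g (t (i + 1))) (g (t i))) := by
        refine ENNReal.ofReal_le_ofReal ?_
        grw [Finset.abs_sum_le_sum_abs, Finset.mul_sum]
        exact Finset.sum_le_sum fun i _ => hg _ _ (hstep i)
    _ = ∑ i ∈ Finset.range n, edist (g (t (i + 1))) (g (t i)) := by
        rw [ENNReal.ofReal_sum_of_nonneg fun _ _ => dist_nonneg]
        simp only [edist_dist]
    _ ≤ eVariationOn g univ := eVariationOn.sum_le ht fun _ => mem_univ _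

open Filter Topology in
theorem ofReal_abs_sub_le_eVariationOn_circleExp_comp {θ : I → ℝ} (hθ : Continuous θ) :
    ENNReal.ofReal |θ 1 - θ 0| ≤ eVariationOn (Circle.exp ∘ θ) univ := by
  have hbound : ∀ r ∈ Ioo (0 : ℝ) 1,
      ENNReal.ofReal ((1 - r ^ 2 / 24) * |θ 1 - θ 0|) ≤ eVariationOn (Circle.exp ∘ θ) univ := by
    rintro r ⟨hr₀, hr₁⟩
    refine ofReal_mul_abs_sub_le_eVariationOn hθ (by nlinarith) hr₀ fun x y hxy => ?_
    have hcube : |θ x - θ y| ^ 3 ≤ r ^ 2 * |θ x - θ y| := by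
      have := abs_nonneg (θ x - θ y)
      nlinarith [mul_le_mul hxy.le hxy.le this hr₀.le]
    change _ ≤ dist (Circle.exp (θ x)) (Circle.exp (θ y))
    linarith [Circle.abs_sub_sub_cube_le_dist_exp (θ x) (θ y)]
  have hlim : Tendsto (fun r : ℝ => ENNReal.ofReal ((1 - r ^ 2 / 24) * |θ 1 - θ 0|))
      (𝓝[>] 0) (𝓝 (ENNReal.ofReal |θ 1 - θ 0|)) := by
    refine (ENNReal.tendsto_ofReal ?_).mono_left nhdsWithin_le_nhds
    have hcont : Continuous fun r : ℝ => (1 - r ^ 2 / 24) * |θ 1 - θ 0| := by fun_prop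
    simpa using hcont.tendsto 0
  exact le_of_tendsto hlim (eventually_of_mem (Ioo_mem_nhdsGT one_pos) hbound)

theorem ofReal_abs_sub_le_eVariationOn_of_lift {X : Type*} [TopologicalSpace X] [CompactSpace X]
    {F : I → C(X, Circle)} {Θ : I → X → ℝ} (hΘ : ∀ x, Continuous fun s => Θ s x)
    (hlift : ∀ s x, Circle.exp (Θ s x) = F s x) (x : X) :
    ENNReal.ofReal |Θ 1 x - Θ 0 x| ≤ eVariationOn F univ :=
  calc ENNReal.ofReal |Θ 1 x - Θ 0 x| ≤ eVariationOn ((fun f : C(X, Circle) => f x) ∘ F) univ := by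
        convert ofReal_abs_sub_le_eVariationOn_circleExp_comp (hΘ x) using 2
        exact funext fun s => (hlift s x).symm
    _ ≤ 1 * eVariationOn F univ :=
        (ContinuousMap.lipschitzWith_eval x).lipschitzOnWith.comp_eVariationOn_le (mapsTo_univ _ _)
    _ = eVariationOn F univ := one_mul _

theorem abs_le_max_abs_int_mul {α p : ℝ} (hα : |α| ≤ p) (k : ℤ) :
    |α| ≤ max |k * p| |α + k * p| := by
  rcases eq_or_ne k 0 with rfl | hk
  · simp
  refine le_max_of_le_left (hα.trans ?_)
  rw [abs_mul, abs_of_nonneg ((abs_nonneg α).trans hα)]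
  exact le_mul_of_one_le_left ((abs_nonneg α).trans hα) (by exact_mod_cast Int.one_le_abs hk)

theorem ofReal_abs_le_eVariationOn_of_path {α : ℝ} (hα : |α| ≤ 2 * π) {F : I → C(I, Circle)}
    (hF : Continuous F) (h0 : F 0 = 1) (h1 : ∀ t, F 1 t = Circle.exp (α * t)) :
    ENNReal.ofReal |α| ≤ eVariationOn F univ := by
  set Θ := Circle.isCoveringMap_exp.liftHomotopy (ContinuousMap.mk F hF).uncurry 0
    (fun x => by simp [h0])
  have hlift : ∀ s x, Circle.exp (Θ (s, x)) = F s x := fun s x =>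
    congr_fun (Circle.isCoveringMap_exp.liftHomotopy_lifts ..) (s, x)
  have hΘ₀ : ∀ x, Θ (0, x) = 0 := Circle.isCoveringMap_exp.liftHomotopy_zero _ _ _
  have hvar : ∀ t, ENNReal.ofReal |Θ (1, t)| ≤ eVariationOn F univ := fun t => by
    simpa [hΘ₀] using
      ofReal_abs_sub_le_eVariationOn_of_lift (Θ := fun s x => Θ (s, x)) (by fun_prop) hlift t
  obtain ⟨k, hk⟩ := Circle.exists_int_of_exp_eq_exp (θ := fun t => Θ (1, t))
    (ψ := fun t => α * t) (by fun_prop) (by fun_prop) fun t => (hlift 1 t).trans (h1 t)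
  rcases le_max_iff.1 (abs_le_max_abs_int_mul hα k) with h | h
  · exact (ENNReal.ofReal_le_ofReal h).trans (by simpa [hk] using hvar 0)
  · exact (ENNReal.ofReal_le_ofReal h).trans (by simpa [hk] using hvar 1)

/-- If `|α| ≤ 2π` and `u(t) = exp(iαt)`, then the C* exponential length of `u`,
i.e. the infimum of lengths of rectifiable paths of unitaries in `C([0,1])`
from `1` to `u`, equals `|α|`. -/
theorem cel_exp_eq_abs (α : ℝ) (hα : |α| ≤ 2 * π)
    (u : C(unitInterval, Circle)) (hu : ∀ t : unitInterval, u t = Circle.exp (α * t)) :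
    celCircle u = ENNReal.ofReal |α| :=
  le_antisymm (celCircle_le_ofReal_abs hu) <| le_iInf₂ fun F hF => le_iInf₂ fun h0 h1 =>
    ofReal_abs_le_eVariationOn_of_path hα hF h0 (by simp [h1, hu])
end

section
/- Let Y be a metric space and let X ⊂ Y^k be the set of k-tuples (y₁,…,y_k) with pairwise distinct entries. Then the restriction to X of the quotient map π : Y^k → P^k Y (the k-fold symmetric product) is a covering map onto its image. -/
/-!
Permutations act on tuples with distinct entries freely. In a Hausdorff space the entries of such
a tuple have pairwise disjoint open neighbourhoods, and their product is a neighbourhood of the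
tuple disjoint from all of its nontrivial translates. Since the quotient map to the symmetric
product is open, its restriction to distinct tuples is a quotient covering map in the sense of
`IsQuotientCoveringMap`, hence a covering map onto its image.
-/

/-- The permutation relation on `k`-tuples: two tuples are related iff one is a
permutation of the other.  The `k`-fold symmetric product `P^k Y` is the quotient
`Quot (permRel Y k)`, with the quotient topology. -/
def permRel (Y : Type*) (k : ℕ) (a b : Fin k → Y) : Prop :=
  ∃ σ : Equiv.Perm (Fin k), a = b ∘ σ

open Function Set Topology

theorem permRel_equivalence (Y : Type*) (k : ℕ) : Equivalence (permRel Y k) where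
  refl _ := ⟨1, rfl⟩
  symm := by
    rintro _ b ⟨σ, rfl⟩
    exact ⟨σ⁻¹, by simp [comp_assoc]⟩
  trans := by
    rintro _ _ _ ⟨σ, rfl⟩ ⟨τ, rfl⟩
    exact ⟨τ * σ, rfl⟩

theorem quot_mk_permRel_eq_iff {Y : Type*} {k : ℕ} {a b : Fin k → Y} :
    Quot.mk (permRel Y k) a = Quot.mk (permRel Y k) b ↔ ∃ σ : Equiv.Perm (Fin k), a = b ∘ σ := by
  rw [Quot.eq, (permRel_equivalence Y k).eqvGen_iff, permRel]

section InjectiveTuples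

variable {ι Y : Type*}

instance : MulAction (Equiv.Perm ι) {a : ι → Y // Injective a} where
  smul σ a := ⟨a.1 ∘ σ.symm, a.2.comp σ.symm.injective⟩
  one_smul _ := rfl
  mul_smul _ _ _ := rfl

@[simp]
theorem coe_perm_smul (σ : Equiv.Perm ι) (a : {a : ι → Y // Injective a}) :
    (σ • a).1 = a.1 ∘ σ.symm :=
  rfl

variable [TopologicalSpace Y]

instance : ContinuousConstSMul (Equiv.Perm ι) {a : ι → Y // Injective a} where
  continuous_const_smul σ :=
    ((continuous_pi fun i => continuous_apply (σ.symm i)).comp continuous_subtype_val).subtype_mk _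

variable [T2Space Y] [Finite ι]

theorem isOpen_setOf_injective : IsOpen {a : ι → Y | Injective a} := by
  simp only [Injective, ofPred_forall, imp_iff_not_or, ofPred_or]
  exact isOpen_iInter_of_finite fun i => isOpen_iInter_of_finite fun j =>
    (isOpen_ne_fun (continuous_apply i) (continuous_apply j)).union isOpen_const

theorem exists_nhds_eq_one_of_perm_smul_inter_nonempty (a : {a : ι → Y // Injective a}) :
    ∃ U ∈ 𝓝 a, ∀ σ : Equiv.Perm ι, ((σ • ·) '' U ∩ U).Nonempty → σ = 1 := by
  obtain ⟨V, hV, hV_disj⟩ := (finite_range a.1).t2_separation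
  refine ⟨Subtype.val ⁻¹' univ.pi fun i => V (a.1 i), ?_, fun σ ⟨_, ⟨b, hb, rfl⟩, hσb⟩ => ?_⟩
  · refine (IsOpen.preimage continuous_subtype_val ?_).mem_nhds fun i _ => (hV _).1
    exact isOpen_set_pi finite_univ fun i _ => (hV _).2
  · have hb_σ (i : ι) : b.1 i ∈ V (a.1 (σ i)) := by simpa using hσb (σ i) trivial
    exact Equiv.ext fun i => a.2 <|
      hV_disj.elim_set (mem_range_self _) (mem_range_self _) (b.1 i) (hb_σ i) (hb i trivial)

end InjectiveTuples

section SymmetricProduct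

variable {Y : Type*} [TopologicalSpace Y]

theorem isOpenMap_quot_mk_permRel {k : ℕ} : IsOpenMap (Quot.mk (permRel Y k)) := by
  intro W hW
  rw [← isQuotientMap_quot_mk.isOpen_preimage]
  have h_saturation : Quot.mk (permRel Y k) ⁻¹' (Quot.mk (permRel Y k) '' W) =
      ⋃ σ : Equiv.Perm (Fin k), (· ∘ σ) ⁻¹' W := by
    ext c
    simp only [mem_preimage, mem_image, mem_iUnion, quot_mk_permRel_eq_iff]
    constructor
    · rintro ⟨b, hb, σ, rfl⟩
      exact ⟨σ, hb⟩
    · rintro ⟨σ, hσ⟩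
      exact ⟨c ∘ σ, hσ, σ, rfl⟩
  rw [h_saturation]
  exact isOpen_iUnion fun σ => hW.preimage (by fun_prop)

theorem isQuotientCoveringMap_symmetricProduct [T2Space Y] (k : ℕ) :
    IsQuotientCoveringMap
      (rangeFactorization fun a : {a : Fin k → Y // Injective a} => Quot.mk (permRel Y k) a.1)
      (Equiv.Perm (Fin k)) where
  toIsQuotientMap :=
    (isOpenMap_quot_mk_permRel.comp isOpen_setOf_injective.isOpenMap_subtype_val).isStrictMap
      (continuous_quot_mk.comp continuous_subtype_val)
  apply_eq_iff_mem_orbit {a b} := by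
    rw [Subtype.ext_iff, rangeFactorization_coe, rangeFactorization_coe, quot_mk_permRel_eq_iff]
    constructor
    · rintro ⟨σ, hσ⟩
      exact ⟨σ.symm, Subtype.ext hσ.symm⟩
    · rintro ⟨σ, rfl⟩
      exact ⟨σ.symm, rfl⟩
  disjoint := exists_nhds_eq_one_of_perm_smul_inter_nonempty

end SymmetricProduct

/-- Let `X ⊆ Y^k` be the set of tuples with pairwise distinct entries.  The restriction to
`X` of the quotient map `π : Y^k → P^k Y` is a covering map onto its image. -/
theorem isCoveringMap_symmetricProduct (Y : Type*) [MetricSpace Y] (k : ℕ) :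
    IsCoveringMap (fun a : {a : Fin k → Y // Function.Injective a} =>
      (⟨Quot.mk (permRel Y k) a.1, a, rfl⟩ :
        Set.range (fun a : {a : Fin k → Y // Function.Injective a} =>
          Quot.mk (permRel Y k) a.1))) :=
  (isQuotientCoveringMap_symmetricProduct k).isCoveringMap
end

section
/- Let s ↦ F_s be a continuous path in the unitary group of M_n(C[0,1]), and suppose there are continuous functions f¹, f², …, f^n : [0,1]×[0,1] → S¹ such that for every (s,t), the multiset {f^1_s(t),…,f^n_s(t)} is exactly the multiset of eigenvalues of F_s(t), with f^i_s(t) ≠ f^j_s(t) whenever i ≠ j. Then length(s ↦ F_s) ≥ max over 1 ≤ j ≤ n of length(s ↦ f^j_s), where f^j_s is regarded as a unitary in C[0,1]. -/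
open scoped Matrix.Norms.L2Operator ENNReal

/-- For a continuous function `f` on the square and `s ∈ [0,1]`, the sliceAt `t ↦ f(s,t)`,
viewed as an element of `C([0,1], ℂ)`. -/
noncomputable def sliceAt (f : C(unitInterval × unitInterval, ℂ)) (s : unitInterval) :
    C(unitInterval, ℂ) :=
  f.comp ⟨fun t => (s, t), by continuity⟩

/-!
If `A = P diag(d) P*` and `B = Q diag(e) Q*` with `P`, `Q` unitary, then every `e j` lies within
`‖A - B‖` of some `d i`: apply `A - B` to the eigenvector `Q e_j` of `B`.

The eigenvalue functions are uniformly separated by some `δ > 0`, and `s ↦ f^j_s` is uniformly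
continuous. So for `s, s'` close enough, `f^j_{s'}(t)` is within `δ / 2` of `f^j_s(t)`, the
eigenvalue of `F_s(t)` nearest to `f^j_{s'}(t)` is `f^j_s(t)` itself, and
`|f^j_s(t) - f^j_{s'}(t)| ≤ ‖F_s(t) - F_{s'}(t)‖`. Increments of `s ↦ f^j_s` are thus dominated by
those of `F` at small scales, which is enough to compare total variations, since a partition can
always be refined to one of small mesh.
-/

namespace Matrix

variable {𝕜 ι : Type*} [RCLike 𝕜] [Fintype ι] [DecidableEq ι]

lemma norm_toEuclideanCLM_apply_of_mem_unitaryGroup {U : Matrix ι ι 𝕜}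
    (hU : U ∈ unitaryGroup ι 𝕜) (x : EuclideanSpace 𝕜 ι) :
    ‖toEuclideanCLM (n := ι) (𝕜 := 𝕜) U x‖ = ‖x‖ :=
  ContinuousLinearMap.norm_map_of_mem_unitary (Unitary.map_mem _ hU) x

lemma mul_norm_le_norm_toEuclideanCLM_diagonal_apply {c : ι → 𝕜} {r : ℝ} (hr₀ : 0 ≤ r)
    (hr : ∀ i, r ≤ ‖c i‖) (x : EuclideanSpace 𝕜 ι) :
    r * ‖x‖ ≤ ‖toEuclideanCLM (n := ι) (𝕜 := 𝕜) (diagonal c) x‖ := by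
  refine (sq_le_sq₀ (by positivity) (by positivity)).mp ?_
  simp only [mul_pow, EuclideanSpace.norm_sq_eq, ofLp_toEuclideanCLM, mulVec_diagonal, norm_mul,
    Finset.mul_sum]
  gcongr with i
  exact hr i

lemma conj_diagonal_sub_smul_one {P : Matrix ι ι 𝕜} (hP : P ∈ unitaryGroup ι 𝕜) (d : ι → 𝕜)
    (μ : 𝕜) : P * diagonal (fun i => d i - μ) * star P = P * diagonal d * star P - μ • 1 := by
  have hdiag : diagonal (fun i => d i - μ) = diagonal d - μ • 1 := by
    rw [smul_one_eq_diagonal, diagonal_sub]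
  rw [hdiag, mul_sub, sub_mul, mul_smul_comm, mul_one, smul_mul_assoc,
    mem_unitaryGroup_iff.mp hP]

theorem exists_norm_sub_le_of_toEuclideanCLM_apply_eq_smul [Nonempty ι]
    {A B P : Matrix ι ι 𝕜} (hP : P ∈ unitaryGroup ι 𝕜) {d : ι → 𝕜}
    (hA : A = P * diagonal d * star P) {μ : 𝕜} {x : EuclideanSpace 𝕜 ι} (hx : x ≠ 0)
    (hBx : toEuclideanCLM (n := ι) (𝕜 := 𝕜) B x = μ • x) :
    ∃ i, ‖d i - μ‖ ≤ ‖A - B‖ := by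
  let T := toEuclideanCLM (n := ι) (𝕜 := 𝕜)
  obtain ⟨i, hi⟩ := Finite.exists_min fun i => ‖d i - μ‖
  refine ⟨i, le_of_mul_le_mul_right ?_ (norm_pos_iff.2 hx)⟩
  have hconj : T (A - B) x = T P (T (diagonal fun k => d k - μ) (T (star P) x)) :=
    calc T (A - B) x = T A x - μ • x := by rw [map_sub, ← hBx]; rfl
      _ = T (P * (diagonal fun k => d k - μ) * star P) x := by
        rw [conj_diagonal_sub_smul_one hP, ← hA, map_sub, map_smul, map_one]; rfl
      _ = _ := by rw [map_mul, map_mul]; rfl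
  calc ‖d i - μ‖ * ‖x‖ = ‖d i - μ‖ * ‖T (star P) x‖ := by
        rw [norm_toEuclideanCLM_apply_of_mem_unitaryGroup (Unitary.star_mem hP)]
    _ ≤ ‖T (diagonal fun k => d k - μ) (T (star P) x)‖ :=
        mul_norm_le_norm_toEuclideanCLM_diagonal_apply (norm_nonneg _) hi _
    _ = ‖T (A - B) x‖ := by rw [hconj, norm_toEuclideanCLM_apply_of_mem_unitaryGroup hP]
    _ ≤ ‖A - B‖ * ‖x‖ := (T (A - B)).le_opNorm x

theorem exists_norm_sub_le_of_eq_conj_diagonal {A B P Q : Matrix ι ι 𝕜}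
    (hP : P ∈ unitaryGroup ι 𝕜) (hQ : Q ∈ unitaryGroup ι 𝕜) {d e : ι → 𝕜}
    (hA : A = P * diagonal d * star P) (hB : B = Q * diagonal e * star Q) (j : ι) :
    ∃ i, ‖d i - e j‖ ≤ ‖A - B‖ := by
  have : Nonempty ι := ⟨j⟩
  let T := toEuclideanCLM (n := ι) (𝕜 := 𝕜)
  let y := EuclideanSpace.single j (1 : 𝕜)
  have hBQ : B * Q = Q * diagonal e := by
    rw [hB, mul_assoc, mem_unitaryGroup_iff'.mp hQ, mul_one]
  have hy : T (diagonal e) y = e j • y := by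
    ext i
    by_cases h : i = j <;> simp [T, y, h]
  refine exists_norm_sub_le_of_toEuclideanCLM_apply_eq_smul hP hA (x := T Q y) ?_ ?_
  · rw [← norm_ne_zero_iff, norm_toEuclideanCLM_apply_of_mem_unitaryGroup hQ]
    simp [y]
  · calc T B (T Q y) = T (B * Q) y := by rw [map_mul]; rfl
      _ = T Q (T (diagonal e) y) := by rw [hBQ, map_mul]; rfl
      _ = e j • T Q y := by rw [hy, map_smul]

theorem norm_sub_le_of_eq_conj_diagonal_of_separated {A B P Q : Matrix ι ι 𝕜}
    (hP : P ∈ unitaryGroup ι 𝕜) (hQ : Q ∈ unitaryGroup ι 𝕜) {d e : ι → 𝕜}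
    (hA : A = P * diagonal d * star P) (hB : B = Q * diagonal e * star Q) {j : ι} {δ : ℝ}
    (hsep : ∀ i, i ≠ j → δ ≤ ‖d i - d j‖) (hj : ‖d j - e j‖ < δ / 2) :
    ‖d j - e j‖ ≤ ‖A - B‖ := by
  -- `d j` is the eigenvalue of `A` nearest to `e j`.
  obtain ⟨i, hi⟩ := exists_norm_sub_le_of_eq_conj_diagonal hP hQ hA hB j
  obtain rfl | hij := eq_or_ne i j
  · exact hi
  · have := norm_sub_le_norm_sub_add_norm_sub (d i) (e j) (d j)
    rw [norm_sub_rev (e j)] at this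
    linarith [hsep i hij]

end Matrix

open Filter Set Topology

theorem exists_pos_forall_le_dist {X E ι : Type*} [TopologicalSpace X] [CompactSpace X]
    [MetricSpace E] [Finite ι] {f : ι → X → E} (hf : ∀ i, Continuous (f i))
    (hne : ∀ x i j, i ≠ j → f i x ≠ f j x) :
    ∃ δ > 0, ∀ x i j, i ≠ j → δ ≤ dist (f i x) (f j x) := by
  have hpair : ∀ i j, ∀ᶠ δ in 𝓝[>] (0 : ℝ), ∀ x, i ≠ j → δ ≤ dist (f i x) (f j x) := by
    intro i j
    rcases isEmpty_or_nonempty X with hX | hX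
    · exact .of_forall fun _ x => isEmptyElim x
    obtain rfl | hij := eq_or_ne i j
    · exact .of_forall fun _ _ h => absurd rfl h
    obtain ⟨x₀, hx₀⟩ := ((hf i).dist (hf j)).exists_forall_le (by simp)
    filter_upwards [Ioo_mem_nhdsGT (dist_pos.2 (hne x₀ i j hij))] with δ hδ x _
    exact hδ.2.le.trans (hx₀ x)
  obtain ⟨δ, hδ, hδpos⟩ := ((eventually_all.2 fun i => eventually_all.2 (hpair i)).and
    self_mem_nhdsWithin).exists
  exact ⟨δ, hδpos, fun x i j => hδ i j x⟩

theorem continuous_sliceAt (f : C(unitInterval × unitInterval, ℂ)) : Continuous (sliceAt f) :=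
  f.curry.continuous

theorem eVariationOn_le_of_forall_edist_le_eVariationOn_Icc {α E E' : Type*} [LinearOrder α]
    [PseudoEMetricSpace E] [PseudoEMetricSpace E'] {g : α → E} {F : α → E'} {s : Set α}
    (h : ∀ a ∈ s, ∀ b ∈ s, a ≤ b → edist (g a) (g b) ≤ eVariationOn F (s ∩ Icc a b)) :
    eVariationOn g s ≤ eVariationOn F s := by
  refine iSup_le fun ⟨n, u, hu, us⟩ => ?_
  calc ∑ i ∈ Finset.range n, edist (g (u (i + 1))) (g (u i))
      ≤ ∑ i ∈ Finset.range n, eVariationOn F (s ∩ Icc (u i) (u (i + 1))) :=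
        Finset.sum_le_sum fun i _ => by
          rw [edist_comm]; exact h _ (us i) _ (us (i + 1)) (hu i.le_succ)
    _ = eVariationOn F (s ∩ Icc (u 0) (u n)) := eVariationOn.sum F hu fun i _ _ => us i
    _ ≤ eVariationOn F s := eVariationOn.mono F inter_subset_left

section

variable {E E' : Type*} [PseudoEMetricSpace E] [PseudoEMetricSpace E'] {s : Set ℝ}
  [s.OrdConnected] {g : s → E} {F : s → E'} {η : ℝ}

theorem edist_le_eVariationOn_Icc_of_forall_dist_lt (hη : 0 < η)
    (hloc : ∀ a b : s, dist a b < η → edist (g a) (g b) ≤ edist (F a) (F b))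
    {a b : s} (hab : a ≤ b) : edist (g a) (g b) ≤ eVariationOn F (Icc a b) := by
  obtain ⟨k, hk⟩ := exists_nat_ge (((b : ℝ) - a) / (η / 2))
  rw [div_le_iff₀ (half_pos hη)] at hk
  induction k generalizing b with
  | zero =>
    obtain rfl : b = a := le_antisymm (by simpa using hk) hab
    simp
  | succ k ih =>
    by_cases hba : (b : ℝ) - a < η
    · refine (hloc a b ?_).trans (eVariationOn.edist_le F ⟨le_rfl, hab⟩ ⟨hab, le_rfl⟩)
      rwa [Subtype.dist_eq, Real.dist_eq, abs_sub_comm,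
        abs_of_nonneg (sub_nonneg.2 (Subtype.coe_le_coe.2 hab))]
    let c : s := ⟨(b : ℝ) - η / 2, Set.OrdConnected.out' a.2 b.2 ⟨by linarith, by linarith⟩⟩
    have hc : (c : ℝ) = b - η / 2 := rfl
    have hac : a ≤ c := Subtype.coe_le_coe.1 (by rw [hc]; linarith)
    have hcb : c ≤ b := Subtype.coe_le_coe.1 (by rw [hc]; linarith)
    have hcb_dist : dist c b < η := by
      rw [Subtype.dist_eq, Real.dist_eq, hc, abs_of_nonpos (by linarith)]
      linarith
    calc edist (g a) (g b) ≤ edist (g a) (g c) + edist (g c) (g b) := edist_triangle _ _ _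
      _ ≤ eVariationOn F (Icc a c) + eVariationOn F (Icc c b) := by
        gcongr
        · exact ih hac (by push_cast at hk; rw [hc]; linarith)
        · exact (hloc c b hcb_dist).trans (eVariationOn.edist_le F ⟨le_rfl, hcb⟩ ⟨hcb, le_rfl⟩)
      _ = eVariationOn F (Icc a b) := by
        simpa only [univ_inter] using eVariationOn.Icc_add_Icc F hac hcb (mem_univ c)

theorem eVariationOn_le_of_forall_dist_lt (hη : 0 < η)
    (hloc : ∀ a b : s, dist a b < η → edist (g a) (g b) ≤ edist (F a) (F b)) :
    eVariationOn g univ ≤ eVariationOn F univ :=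
  eVariationOn_le_of_forall_edist_le_eVariationOn_Icc fun a _ b _ hab => by
    simpa only [univ_inter] using edist_le_eVariationOn_Icc_of_forall_dist_lt hη hloc hab

end

theorem length_ge_eigenvalue_length_general (n : ℕ)
    (F : unitInterval → C(unitInterval, Matrix (Fin n) (Fin n) ℂ))
    (f : Fin n → C(unitInterval × unitInterval, ℂ))
    (hdistinct : ∀ (p : unitInterval × unitInterval) (i j : Fin n), i ≠ j → f i p ≠ f j p)
    (hdiag : ∀ s t, ∃ P ∈ Matrix.unitaryGroup (Fin n) ℂ,
      F s t = P * Matrix.diagonal (fun i => f i (s, t)) * star P) :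
    ∀ j : Fin n, eVariationOn (fun s => sliceAt (f j) s) Set.univ ≤ eVariationOn F Set.univ := by
  intro j
  obtain ⟨δ, hδ, hsep⟩ := exists_pos_forall_le_dist (fun i => (f i).continuous) hdistinct
  obtain ⟨η, hη, hclose⟩ := Metric.uniformContinuous_iff.1
    (CompactSpace.uniformContinuous_of_continuous (continuous_sliceAt (f j))) (δ / 2) (half_pos hδ)
  refine eVariationOn_le_of_forall_dist_lt hη fun a b hab => ?_
  rw [edist_dist, edist_dist]
  refine ENNReal.ofReal_le_ofReal <| (ContinuousMap.dist_le dist_nonneg).2 fun t => ?_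
  obtain ⟨P, hP, hPa⟩ := hdiag a t
  obtain ⟨Q, hQ, hQb⟩ := hdiag b t
  have hsep' : ∀ i, i ≠ j → δ ≤ ‖f i (a, t) - f j (a, t)‖ := fun i hi => by
    rw [← dist_eq_norm]; exact hsep (a, t) i j hi
  have hj : ‖f j (a, t) - f j (b, t)‖ < δ / 2 := by
    rw [← dist_eq_norm]; exact (ContinuousMap.dist_apply_le_dist t).trans_lt (hclose hab)
  calc dist (sliceAt (f j) a t) (sliceAt (f j) b t) = ‖f j (a, t) - f j (b, t)‖ :=
        dist_eq_norm _ _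
    _ ≤ ‖F a t - F b t‖ :=
        Matrix.norm_sub_le_of_eq_conj_diagonal_of_separated hP hQ hPa hQb hsep' hj
    _ = dist (F a t) (F b t) := (dist_eq_norm _ _).symm
    _ ≤ dist (F a) (F b) := ContinuousMap.dist_apply_le_dist t

/-- Let `s ↦ F_s` be a continuous path of unitaries in `M_n(C[0,1])` and let
`f¹, …, fⁿ : [0,1]² → S¹` be continuous functions which, for each `(s,t)`, list the
eigenvalues of `F_s(t)` (i.e. `F_s(t)` is unitarily equivalent to
`diag(f¹_s(t),…,fⁿ_s(t))`) and are pairwise distinct at every point.  Then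
`length(s ↦ F_s) ≥ max_j length(s ↦ f^j_s)`, lengths being total variations,
where `M_n(C[0,1])` carries the sup norm over `t` of the operator norm. -/
theorem length_ge_eigenvalue_length (n : ℕ)
    (F : unitInterval → C(unitInterval, Matrix (Fin n) (Fin n) ℂ))
    (hFc : Continuous F)
    (hFu : ∀ s t, F s t ∈ Matrix.unitaryGroup (Fin n) ℂ)
    (f : Fin n → C(unitInterval × unitInterval, ℂ))
    (hdistinct : ∀ (p : unitInterval × unitInterval) (i j : Fin n), i ≠ j → f i p ≠ f j p)
    (hdiag : ∀ s t, ∃ P ∈ Matrix.unitaryGroup (Fin n) ℂ,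
      F s t = P * Matrix.diagonal (fun i => f i (s, t)) * star P) :
    ∀ j : Fin n, eVariationOn (fun s => sliceAt (f j) s) Set.univ ≤ eVariationOn F Set.univ :=
  length_ge_eigenvalue_length_general n F f hdistinct hdiag
end

section
/- For unitaries a, b in a unital C*-algebra A with a, b in the connected component of the identity and ‖a − b‖ < ε < 1, the C* exponential lengths satisfy |cel(a) − cel(b)| ≤ (π/2)·ε. Moreover, for any unitary u ∈ A, cel(u a u*) = cel(a). -/
/-!
Write `a = (a b⋆) b`. Since `‖a b⋆ - 1‖ = ‖a - b‖ < 2`, the spectrum of `a b⋆` avoids `-1`, so the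
continuous functional calculus gives `a b⋆ = exp (i h)` with `h` self-adjoint and
`‖h‖ = arccos (1 - ‖a - b‖² / 2) ≤ (π / 2) ‖a - b‖` (arc versus chord on the unit circle). The
path `t ↦ exp (i t h)` has length at most `‖h‖`, and `cel` is subadditive because the pointwise
product of two unitary paths is no longer than the two paths together: multiplication of unitaries
is 1-Lipschitz in each factor. Conjugation by a unitary is a `⋆`-automorphism, and
`⋆`-homomorphisms of C⋆-algebras are contractive, so they cannot increase `cel`.
-/
open scoped Real ENNReal

/-- The C* exponential length of an element `u` of a unital C*-algebra `A`: the infimum of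
lengths (total variations) of continuous paths of unitaries from `1` to `u`
(equivalently, the infimum of `Σ‖h_j‖` over factorizations `u = exp(ih₁)⋯exp(ih_k)`). -/
noncomputable def cel (A : Type*) [NormedRing A] [StarRing A] (u : A) : ℝ≥0∞ :=
  ⨅ (F : unitInterval → A) (_ : Continuous F) (_ : ∀ s, F s ∈ unitary A)
    (_ : F 0 = 1) (_ : F 1 = u), eVariationOn F Set.univ

open scoped NNReal
open NormedSpace Set

theorem eVariationOn_le_add_of_edist_le {α E F G : Type*} [LinearOrder α]
    [PseudoEMetricSpace E] [PseudoEMetricSpace F] [PseudoEMetricSpace G]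
    {f : α → E} {g : α → F} {h : α → G} {s : Set α}
    (H : ∀ x ∈ s, ∀ y ∈ s, edist (h x) (h y) ≤ edist (f x) (f y) + edist (g x) (g y)) :
    eVariationOn h s ≤ eVariationOn f s + eVariationOn g s := by
  refine iSup_le fun ⟨n, u, hu, us⟩ => ?_
  calc ∑ i ∈ Finset.range n, edist (h (u (i + 1))) (h (u i))
      ≤ ∑ i ∈ Finset.range n,
          (edist (f (u (i + 1))) (f (u i)) + edist (g (u (i + 1))) (g (u i))) :=
        Finset.sum_le_sum fun i _ => H _ (us _) _ (us _)
    _ ≤ eVariationOn f s + eVariationOn g s := by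
        rw [Finset.sum_add_distrib]
        exact add_le_add (eVariationOn.sum_le hu us) (eVariationOn.sum_le hu us)

theorem LipschitzWith.eVariationOn_comp_coe_unitInterval_le {E : Type*} [PseudoEMetricSpace E]
    {K : ℝ≥0} {f : ℝ → E} (hf : LipschitzWith K f) :
    eVariationOn (f ∘ Subtype.val : unitInterval → E) univ ≤ K := by
  have hval : eVariationOn (Subtype.val : unitInterval → ℝ) univ = 1 := by
    have := (Subtype.mono_coe (· ∈ unitInterval)).monotoneOn univ
      |>.eVariationOn_eq (a := 0) (b := 1) trivial trivial
    have hIcc : Icc (0 : unitInterval) 1 = univ := eq_univ_of_forall fun x => ⟨x.2.1, x.2.2⟩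
    simpa [hIcc] using this
  calc eVariationOn (f ∘ Subtype.val) univ
      ≤ K * eVariationOn (Subtype.val : unitInterval → ℝ) univ :=
        (hf.lipschitzOnWith (s := univ)).comp_eVariationOn_le (mapsTo_univ _ _)
    _ = K := by rw [hval, mul_one]

theorem Real.arccos_one_sub_sq_div_two_le {d : ℝ} (hd₀ : 0 ≤ d) (hd₂ : d ≤ 2) :
    arccos (1 - d ^ 2 / 2) ≤ π / 2 * d := by
  set θ := arccos (1 - d ^ 2 / 2)
  have hθ₀ : 0 ≤ θ := arccos_nonneg _
  have hθπ : θ ≤ π := arccos_le_pi _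
  have hcos : cos θ = 1 - d ^ 2 / 2 := cos_arccos (by nlinarith) (by nlinarith)
  have hchord : sin (θ / 2) = d / 2 := by
    have hsin : 0 ≤ sin (θ / 2) := sin_nonneg_of_nonneg_of_le_pi (by linarith) (by linarith)
    have hsq : sin (θ / 2) ^ 2 = (d / 2) ^ 2 := by
      rw [sin_sq_eq_half_sub, mul_div_cancel₀ θ two_ne_zero, hcos]; ring
    exact (pow_left_inj₀ hsin (by linarith) two_ne_zero).mp hsq
  have hjordan := mul_le_sin (x := θ / 2) (by linarith) (by linarith)
  rw [hchord] at hjordan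
  have hπ := pi_pos
  calc θ = π * (2 / π * (θ / 2)) := by field_simp
    _ ≤ π * (d / 2) := by gcongr
    _ = π / 2 * d := by ring

theorem edist_mul_mul_le_of_mem_unitary {A : Type*} [NormedRing A] [StarRing A] [CStarRing A]
    {u u' v v' : A} (hu' : u' ∈ unitary A) (hv : v ∈ unitary A) :
    edist (u * v) (u' * v') ≤ edist u u' + edist v v' := by
  simp only [edist_dist, dist_eq_norm]
  rw [← ENNReal.ofReal_add (norm_nonneg _) (norm_nonneg _)]
  refine ENNReal.ofReal_le_ofReal ?_
  calc ‖u * v - u' * v'‖ = ‖(u - u') * v + u' * (v - v')‖ := by noncomm_ring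
    _ ≤ ‖(u - u') * v‖ + ‖u' * (v - v')‖ := norm_add_le _ _
    _ = ‖u - u'‖ + ‖v - v'‖ := by
        rw [CStarRing.norm_mul_mem_unitary _ hv, CStarRing.norm_mem_unitary_mul _ hu']

section NormedRing

variable {A : Type*} [NormedRing A] [StarRing A]

theorem cel_le_eVariationOn {u : A} {F : unitInterval → A} (hF : Continuous F)
    (hFu : ∀ s, F s ∈ unitary A) (hF₀ : F 0 = 1) (hF₁ : F 1 = u) :
    cel A u ≤ eVariationOn F univ :=
  iInf₂_le_of_le F hF <| iInf₂_le_of_le hFu hF₀ <| iInf_le_of_le hF₁ le_rfl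

theorem le_cel {x : ℝ≥0∞} {u : A}
    (h : ∀ F : unitInterval → A, Continuous F → (∀ s, F s ∈ unitary A) → F 0 = 1 → F 1 = u →
      x ≤ eVariationOn F univ) :
    x ≤ cel A u :=
  le_iInf₂ fun F hF => le_iInf₂ fun hFu hF₀ => le_iInf fun hF₁ => h F hF hFu hF₀ hF₁

theorem le_cel_add {x c : ℝ≥0∞} {u : A}
    (h : ∀ F : unitInterval → A, Continuous F → (∀ s, F s ∈ unitary A) → F 0 = 1 → F 1 = u →
      x ≤ eVariationOn F univ + c) :
    x ≤ cel A u + c := by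
  simp only [cel, ENNReal.iInf_add]
  exact le_iInf₂ fun F hF => le_iInf₂ fun hFu hF₀ => le_iInf fun hF₁ => h F hF hFu hF₀ hF₁

theorem cel_le_of_lipschitzWith {u : A} {K : ℝ≥0} {γ : ℝ → A} (hγ : LipschitzWith K γ)
    (hγu : ∀ t ∈ unitInterval, γ t ∈ unitary A) (hγ₀ : γ 0 = 1) (hγ₁ : γ 1 = u) :
    cel A u ≤ K :=
  (cel_le_eVariationOn (hγ.continuous.comp continuous_subtype_val) (fun s => hγu s s.2)
    hγ₀ hγ₁).trans hγ.eVariationOn_comp_coe_unitInterval_le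

theorem cel_mul_le [CStarRing A] (u v : A) : cel A (u * v) ≤ cel A u + cel A v := by
  refine le_cel_add fun F hF hFu hF₀ hF₁ => ?_
  rw [add_comm]
  refine le_cel_add fun G hG hGu hG₀ hG₁ => ?_
  calc cel A (u * v) ≤ eVariationOn (F * G) univ :=
        cel_le_eVariationOn (hF.mul hG) (fun s => mul_mem (hFu s) (hGu s))
          (by simp [hF₀, hG₀]) (by simp [hF₁, hG₁])
    _ ≤ eVariationOn G univ + eVariationOn F univ := by
        rw [add_comm]
        exact eVariationOn_le_add_of_edist_le fun s _ t _ =>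
          edist_mul_mul_le_of_mem_unitary (hFu t) (hGu s)

end NormedRing

section CStarAlgebra

open selfAdjoint Unitary

variable {A : Type*} [CStarAlgebra A]

theorem selfAdjoint.lipschitzWith_expUnitary_smul (x : selfAdjoint A) :
    LipschitzWith ‖x‖₊ fun t : ℝ => (expUnitary (t • x) : A) := by
  set y : A := Complex.I • (x : A)
  have hcoe : (fun t : ℝ => (expUnitary (t • x) : A)) = fun t : ℝ => exp (t • y) := by
    ext t
    simp only [expUnitary_coe, selfAdjoint.val_smul, y, smul_comm (t : ℝ) Complex.I]
  have hderiv (t : ℝ) : HasDerivAt (fun t : ℝ => exp (t • y)) (exp (t • y) * y) t :=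
    hasDerivAt_exp_smul_const y t
  rw [hcoe]
  refine lipschitzWith_of_nnnorm_deriv_le (fun t => (hderiv t).differentiableAt) fun t => ?_
  have hexp : exp (t • y) = (expUnitary (t • x) : A) := congrFun hcoe t |>.symm
  rw [(hderiv t).deriv, hexp, ← NNReal.coe_le_coe, coe_nnnorm, coe_nnnorm,
    CStarRing.norm_coe_unitary_mul]
  simp [y, norm_smul]

theorem cel_expUnitary_le (x : selfAdjoint A) : cel A (expUnitary x) ≤ ‖x‖₊ :=
  cel_le_of_lipschitzWith (lipschitzWith_expUnitary_smul x) (fun t _ => (expUnitary _).2)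
    (by simp) (by simp)

theorem cel_le_cel_add_of_norm_sub_lt_two {a b : A} (ha : a ∈ unitary A) (hb : b ∈ unitary A)
    (hab : ‖a - b‖ < 2) : cel A a ≤ cel A b + .ofReal (π / 2 * ‖a - b‖) := by
  set u : unitary A := ⟨a, ha⟩
  set v : unitary A := ⟨b, hb⟩
  have hfactor : a = (expUnitary (argSelfAdjoint (u * star v)) : A) * b := by
    rw [expUnitary_eq_mul_inv u v hab]
    simp [u, v, mul_assoc, (Unitary.mem_iff.mp hb).1]
  have harg : ‖argSelfAdjoint (u * star v)‖ ≤ π / 2 * ‖a - b‖ := by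
    rw [norm_argSelfAdjoint (norm_sub_eq u v ▸ hab), ← norm_sub_eq u v]
    exact Real.arccos_one_sub_sq_div_two_le (norm_nonneg _) hab.le
  calc cel A a ≤ cel A (expUnitary (argSelfAdjoint (u * star v))) + cel A b := by
        rw [hfactor]; exact cel_mul_le _ _
    _ ≤ .ofReal (π / 2 * ‖a - b‖) + cel A b := by
        gcongr
        refine (cel_expUnitary_le _).trans ?_
        rw [← ENNReal.ofReal_coe_nnreal]
        exact ENNReal.ofReal_le_ofReal harg
    _ = cel A b + .ofReal (π / 2 * ‖a - b‖) := add_comm _ _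

end CStarAlgebra

section StarAlgHom

variable {A B : Type*} [CStarAlgebra A] [CStarAlgebra B]

theorem cel_map_le {F : Type*} [FunLike F A B] [AlgHomClass F ℂ A B] [StarHomClass F A B]
    (φ : F) (a : A) : cel B (φ a) ≤ cel A a := by
  have hφ : LipschitzWith 1 φ := by
    simpa using AddMonoidHomClass.lipschitz_of_bound φ 1 fun x => by
      simpa using NonUnitalStarAlgHom.norm_apply_le φ x
  refine le_cel fun γ hγ hγu hγ₀ hγ₁ => ?_
  calc cel B (φ a) ≤ eVariationOn (φ ∘ γ) univ :=
        cel_le_eVariationOn (hφ.continuous.comp hγ) (fun s => Unitary.map_mem φ (hγu s))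
          (by simp [hγ₀]) (by simp [hγ₁])
    _ ≤ 1 * eVariationOn γ univ :=
        (hφ.lipschitzOnWith (s := univ)).comp_eVariationOn_le (mapsTo_univ _ _)
    _ = eVariationOn γ univ := one_mul _

theorem cel_map_starAlgEquiv (φ : A ≃⋆ₐ[ℂ] B) (a : A) : cel B (φ a) = cel A a :=
  le_antisymm (cel_map_le φ a) (by simpa using cel_map_le φ.symm (φ a))

end StarAlgHom

theorem cel_continuity_and_conjugation_general (A : Type*) [NormedRing A] [StarRing A]
    [CStarRing A] [NormedAlgebra ℂ A] [StarModule ℂ A] [CompleteSpace A]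
    (a b : A) (ha : a ∈ unitary A) (hb : b ∈ unitary A)
    (ε : ℝ) (hab : ‖a - b‖ < ε) (hε : ε < 1) :
    cel A a ≤ cel A b + ENNReal.ofReal (π / 2 * ε) ∧
    cel A b ≤ cel A a + ENNReal.ofReal (π / 2 * ε) ∧
    ∀ u ∈ unitary A, cel A (u * a * star u) = cel A a := by
  let _ : CStarAlgebra A := {}
  have hclose {x y : A} (hx : x ∈ unitary A) (hy : y ∈ unitary A) (hxy : ‖x - y‖ < ε) :
      cel A x ≤ cel A y + ENNReal.ofReal (π / 2 * ε) := by
    refine (cel_le_cel_add_of_norm_sub_lt_two hx hy (by linarith)).trans ?_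
    gcongr
  refine ⟨hclose ha hb hab, hclose hb ha (norm_sub_rev a b ▸ hab), fun u hu => ?_⟩
  simpa using cel_map_starAlgEquiv (Unitary.conjStarAlgAut ℂ A ⟨u, hu⟩) a

/-- For unitaries `a, b` in the connected component of the identity of a unital C*-algebra
with `‖a − b‖ < ε < 1`, one has `|cel(a) − cel(b)| ≤ (π/2)·ε`; moreover conjugation by any
unitary `u` preserves the exponential length: `cel(u a u*) = cel(a)`. -/
theorem cel_continuity_and_conjugation (A : Type*) [NormedRing A] [StarRing A]
    [CStarRing A] [NormedAlgebra ℂ A] [StarModule ℂ A] [CompleteSpace A]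
    (a b : A) (ha : a ∈ unitary A) (hb : b ∈ unitary A)
    (hapath : ∃ F : unitInterval → A, Continuous F ∧ (∀ s, F s ∈ unitary A) ∧
      F 0 = 1 ∧ F 1 = a)
    (hbpath : ∃ F : unitInterval → A, Continuous F ∧ (∀ s, F s ∈ unitary A) ∧
      F 0 = 1 ∧ F 1 = b)
    (ε : ℝ) (hab : ‖a - b‖ < ε) (hε : ε < 1) :
    cel A a ≤ cel A b + ENNReal.ofReal (π / 2 * ε) ∧
    cel A b ≤ cel A a + ENNReal.ofReal (π / 2 * ε) ∧
    ∀ u ∈ unitary A, cel A (u * a * star u) = cel A a :=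
  cel_continuity_and_conjugation_general A a b ha hb ε hab hε
end
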